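/- For μ = 1 (all n+1 filaments of equal circulation, ω = s_1 + 1), the 3×3 Hermitian matrix m_1(ν) = ν²·diag(1,1,1) − 2γν·diag(1, iJ) + B_1, where B_1 = [[ω, −√(n/2), −√(n/2)·i],[−√(n/2), s_1+2, 0],[√(n/2)·i, 0, s_1]], has eigenvalues λ_0 = ν² − 2γν + ω and λ_± = ν² + ω ± √(4γ²ν² + 2ω). -/

import Mathlib

/-! Subtracting `(ν² + ω) • 1` from `m₁F` leaves a matrix depending only on `a = √(n/2)` and
`b = 2γν`, whose characteristic polynomial is `(X + b)(X² − (b² + 2a² + 1))`. Since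
`2a² + 1 = n + 1 = 2ω`, shifting back by `ν² + ω` gives the three eigenvalues. -/

open Matrix Complex Polynomial

/-- The 3×3 Fourier block `m₁(ν) = ν² I − 2γν diag(1, iJ) + B₁` of the filament
problem with `μ = 1`, where `ω = s₁ + 1`, `n = 2s₁ + 1` and
`B₁ = !![ω, −√(n/2), −√(n/2) i; −√(n/2), s₁+2, 0; √(n/2) i, 0, s₁]`. -/
noncomputable def m₁F (n s₁ γ ν : ℝ) : Matrix (Fin 3) (Fin 3) ℂ :=
  !![(ν ^ 2 - 2 * γ * ν + (s₁ + 1) : ℝ), (-Real.sqrt (n / 2) : ℝ), -(Real.sqrt (n / 2) : ℂ) * Complex.I;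
     (-Real.sqrt (n / 2) : ℝ), (ν ^ 2 + s₁ + 2 : ℝ), 2 * γ * ν * Complex.I;
     (Real.sqrt (n / 2) : ℂ) * Complex.I, -(2 * γ * ν * Complex.I), (ν ^ 2 + s₁ : ℝ)]

theorem Matrix.charpoly_add_scalar {n R : Type*} [DecidableEq n] [Fintype n] [CommRing R]
    (M : Matrix n n R) (μ : R) :
    (M + scalar n μ).charpoly = M.charpoly.comp (X - C μ) := by
  simpa [sub_eq_add_neg] using M.charpoly_sub_scalar (-μ)

def filamentCore (a b : ℂ) : Matrix (Fin 3) (Fin 3) ℂ :=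
  !![-b, -a, -a * I; -a, 1, b * I; a * I, -(b * I), -1]

theorem charpoly_filamentCore (a b t : ℂ) (ht : t ^ 2 = b ^ 2 + 2 * a ^ 2 + 1) :
    (filamentCore a b).charpoly = (X + C b) * (X - C t) * (X + C t) := by
  refine Polynomial.funext fun x ↦ ?_
  simp only [eval_charpoly, det_fin_three, filamentCore, eval_mul, eval_add, eval_sub, eval_X,
    eval_C]
  simp only [scalar_apply, Matrix.sub_apply, diagonal_apply_eq, diagonal_apply_ne, of_apply,
    cons_val', cons_val_zero, cons_val_one, cons_val, cons_val_fin_one, ne_eq, Fin.reduceEq,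
    not_false_eq_true]
  linear_combination (x * b ^ 2 + x * a ^ 2 + 2 * b * a ^ 2 + b ^ 3 - a ^ 2) * I_sq + (x + b) * ht

theorem m₁F_eq_filamentCore_add_scalar (n s₁ γ ν : ℝ) :
    m₁F n s₁ γ ν = filamentCore (Real.sqrt (n / 2) : ℝ) (2 * γ * ν : ℝ) +
      scalar (Fin 3) ((ν ^ 2 + (s₁ + 1) : ℝ) : ℂ) := by
  ext i j
  fin_cases i <;> fin_cases j <;> simp [m₁F, filamentCore] <;> ring

theorem eigenvalues_m1_filament_mu_one_general (n : ℕ) (s₁ γ ν : ℝ)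
    (hs : (n : ℝ) = 2 * s₁ + 1) :
    (m₁F n s₁ γ ν).charpoly =
      (X - C ((ν ^ 2 - 2 * γ * ν + (s₁ + 1) : ℝ) : ℂ)) *
      (X - C ((ν ^ 2 + (s₁ + 1) + Real.sqrt (4 * γ ^ 2 * ν ^ 2 + 2 * (s₁ + 1)) : ℝ) : ℂ)) *
      (X - C ((ν ^ 2 + (s₁ + 1) - Real.sqrt (4 * γ ^ 2 * ν ^ 2 + 2 * (s₁ + 1)) : ℝ) : ℂ)) := by
  set t := Real.sqrt (4 * γ ^ 2 * ν ^ 2 + 2 * (s₁ + 1))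
  have ha : Real.sqrt (n / 2) ^ 2 = s₁ + 1 / 2 := by
    rw [Real.sq_sqrt (by positivity), hs]; ring
  have ht : t ^ 2 = 4 * γ ^ 2 * ν ^ 2 + 2 * (s₁ + 1) :=
    Real.sq_sqrt (by nlinarith [sq_nonneg (γ * ν), hs ▸ (Nat.cast_nonneg n : (0 : ℝ) ≤ n)])
  have htC : (t : ℂ) ^ 2 =
      ((2 * γ * ν : ℝ) : ℂ) ^ 2 + 2 * ((Real.sqrt (n / 2) : ℝ) : ℂ) ^ 2 + 1 := by
    simp only [← ofReal_pow, ha, ht]; push_cast; ring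
  rw [m₁F_eq_filamentCore_add_scalar, charpoly_add_scalar, charpoly_filamentCore _ _ _ htC]
  simp only [mul_comp, add_comp, sub_comp, X_comp, C_comp, ofReal_add, ofReal_sub, map_add,
    map_sub]
  ring

theorem eigenvalues_m1_filament_mu_one (n : ℕ) (hn : 3 ≤ n) (s₁ γ ν : ℝ)
    (hs : (n : ℝ) = 2 * s₁ + 1) :
    (m₁F n s₁ γ ν).charpoly =
      (X - C ((ν ^ 2 - 2 * γ * ν + (s₁ + 1) : ℝ) : ℂ)) *
      (X - C ((ν ^ 2 + (s₁ + 1) + Real.sqrt (4 * γ ^ 2 * ν ^ 2 + 2 * (s₁ + 1)) : ℝ) : ℂ)) *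
      (X - C ((ν ^ 2 + (s₁ + 1) - Real.sqrt (4 * γ ^ 2 * ν ^ 2 + 2 * (s₁ + 1)) : ℝ) : ℂ)) :=
  eigenvalues_m1_filament_mu_one_general n s₁ γ ν hs
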